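/- Let X : [0,T) × ℝ → ℝ² be a smooth family of closed curves. Then the signed enclosed area A(t) = ½ ∫₀¹ X(t,u)·(∂ₓX(t,u))^⊥ du is differentiable in t and satisfies the first-variation formula dA/dt (t) = ∫₀¹ (∂ₜX(t,u) · n(t,u)) |∂ᵤX(t,u)| du, i.e. only the normal component of the velocity changes the enclosed area. -/

import Mathlib

open Set MeasureTheory Real Filter
open scoped RealInnerProductSpace

noncomputable section

abbrev E2 : Type := EuclideanSpace ℝ (Fin 2)

def perp (p : E2) : E2 := (WithLp.equiv 2 (Fin 2 → ℝ)).symm ![p 1, -(p 0)]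

def unitNormal (Y : ℝ → E2) (u : ℝ) : E2 := ‖deriv Y u‖⁻¹ • perp (deriv Y u)

def curvature (Y : ℝ → E2) (u : ℝ) : ℝ :=
  -(‖deriv Y u‖⁻¹ * ⟪deriv (fun v => ‖deriv Y v‖⁻¹ • deriv Y v) u, unitNormal Y u⟫)

def curveLength (Y : ℝ → E2) : ℝ := ∫ u in (0:ℝ)..1, ‖deriv Y u‖

def enclosedArea (Y : ℝ → E2) : ℝ := (1/2) * ∫ u in (0:ℝ)..1, ⟪Y u, perp (deriv Y u)⟫

def IsSmoothClosedCurve (Y : ℝ → E2) : Prop :=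
  ContDiff ℝ 2 Y ∧ (∀ u, Y (u + 1) = Y u) ∧ ∀ u, deriv Y u ≠ 0

def IsSmoothClosedFamily (T : ℝ) (X : ℝ → ℝ → E2) : Prop :=
  ContDiffOn ℝ 2 (fun p : ℝ × ℝ => X p.1 p.2) (Ico 0 T ×ˢ univ) ∧
  ∀ t ∈ Ico 0 T, IsSmoothClosedCurve (X t)

/-!
Differentiating the integrand `⟪X, (∂ᵤX)^⊥⟫` in `t` gives `⟪∂ₜX, (∂ᵤX)^⊥⟫ + ⟪X, (∂ₜ∂ᵤX)^⊥⟫`.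
The family is `C²`, so `∂ₜ∂ᵤX = ∂ᵤ∂ₜX`, and an integration by parts over one period, whose
boundary term vanishes by periodicity and in which `p ↦ p^⊥` is skew-adjoint, turns the second
term into the first. Hence `A' = ∫ ⟪∂ₜX, (∂ᵤX)^⊥⟫ = ∫ (∂ₜX ⬝ n) |∂ᵤX|`.

Differentiation under the integral sign, also at the endpoint `t = 0` of `[0, T)`, is justified by
writing the integrand as its value at `0` plus the time integral of its `t`-derivative and
exchanging the two integrals.
-/

open Function

section ParametricIntegral

variable {E : Type*} [NormedAddCommGroup E] [NormedSpace ℝ E]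

theorem IsCompact.continuousOn_intervalIntegral {X : Type*} [TopologicalSpace X]
    [FirstCountableTopology X] {K : Set X} (hK : IsCompact K) {F : X → ℝ → E} {c d : ℝ}
    (hF : ContinuousOn (uncurry F) (K ×ˢ uIcc c d)) :
    ContinuousOn (fun x => ∫ u in c..d, F x u) K := by
  obtain ⟨C, hC⟩ := (hK.prod isCompact_uIcc).exists_bound_of_continuousOn hF
  intro x hx
  refine intervalIntegral.continuousWithinAt_of_dominated_interval (bound := fun _ => C) ?_ ?_
    intervalIntegrable_const ?_
  · filter_upwards [self_mem_nhdsWithin] with y hy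
    exact ((hF.uncurry_left y hy).mono uIoc_subset_uIcc).aestronglyMeasurable measurableSet_uIoc
  · filter_upwards [self_mem_nhdsWithin] with y hy
    exact ae_of_all _ fun u hu => hC (y, u) ⟨hy, uIoc_subset_uIcc hu⟩
  · exact ae_of_all _ fun u hu => hF.uncurry_right u (uIoc_subset_uIcc hu) x hx

theorem intervalIntegral_swap_of_continuousOn {F : ℝ → ℝ → E} {a b c d : ℝ} (hab : a ≤ b)
    (hcd : c ≤ d) (hF : ContinuousOn (uncurry F) (Icc a b ×ˢ Icc c d)) :
    ∫ x in a..b, ∫ y in c..d, F x y = ∫ y in c..d, ∫ x in a..b, F x y := by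
  have hint : Integrable (uncurry F)
      ((volume.restrict (Ioc a b)).prod (volume.restrict (Ioc c d))) := by
    rw [Measure.prod_restrict]
    exact (hF.integrableOn_compact (isCompact_Icc.prod isCompact_Icc)).mono_set
      (prod_mono Ioc_subset_Icc_self Ioc_subset_Icc_self)
  simp only [intervalIntegral.integral_of_le hab, intervalIntegral.integral_of_le hcd]
  exact integral_integral_swap hint

theorem integral_eq_sub_of_hasDerivWithinAt_Ico [CompleteSpace E] {f f' : ℝ → E} {a b s : ℝ}
    (hf : ∀ r ∈ Ico a b, HasDerivWithinAt f (f' r) (Ico a b) r) (hf' : ContinuousOn f' (Ico a b))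
    (hs : s ∈ Ico a b) : ∫ r in a..s, f' r = f s - f a := by
  have hsub : Icc a s ⊆ Ico a b := Icc_subset_Ico_right hs.2
  refine intervalIntegral.integral_eq_sub_of_hasDeriv_right_of_le hs.1
    (fun r hr => (hf r (hsub hr)).continuousWithinAt.mono hsub) (fun r hr => ?_)
    ((hf'.mono hsub).intervalIntegrable_of_Icc hs.1)
  have hr' : r ∈ Ico a b := hsub (Ioo_subset_Icc_self hr)
  exact ((hf r hr').hasDerivAt (Ico_mem_nhds hr.1 hr'.2)).hasDerivWithinAt

theorem integral_hasDerivWithinAt_right_Ico [CompleteSpace E] {G : ℝ → E} {a b t : ℝ}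
    (hG : ContinuousOn G (Ico a b)) (ht : t ∈ Ico a b) :
    HasDerivWithinAt (fun s => ∫ r in a..s, G r) (G t) (Ico a b) t := by
  obtain ⟨r, htr, hrb⟩ := exists_between ht.2
  have hG' : ContinuousOn G (Icc a r) := hG.mono (Icc_subset_Ico_right hrb)
  have : Fact (t ∈ Icc a r) := ⟨⟨ht.1, htr.le⟩⟩
  have h := intervalIntegral.integral_hasDerivWithinAt_right (s := Icc a r) (t := Icc a r)
    ((hG'.mono (Icc_subset_Icc_right htr.le)).intervalIntegrable_of_Icc ht.1)
    (hG'.stronglyMeasurableAtFilter_nhdsWithin measurableSet_Icc t) (hG' t ⟨ht.1, htr.le⟩)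
  exact (hasDerivWithinAt_inter (Iio_mem_nhds htr)).1 (h.mono fun x hx => ⟨hx.1.1, hx.2.le⟩)

theorem hasDerivWithinAt_intervalIntegral_Ico [CompleteSpace E] {F F' : ℝ → ℝ → E}
    {a b c d t : ℝ} (hcd : c ≤ d)
    (hF : ∀ u ∈ Icc c d, ∀ r ∈ Ico a b, HasDerivWithinAt (F · u) (F' r u) (Ico a b) r)
    (hF' : ContinuousOn (uncurry F') (Ico a b ×ˢ Icc c d))
    (hint : ∀ s ∈ Ico a b, IntervalIntegrable (F s) volume c d) (ht : t ∈ Ico a b) :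
    HasDerivWithinAt (fun s => ∫ u in c..d, F s u) (∫ u in c..d, F' t u) (Ico a b) t := by
  have hbox : ∀ s ∈ Ico a b, Icc a s ×ˢ Icc c d ⊆ Ico a b ×ˢ Icc c d := fun s hs =>
    prod_mono (Icc_subset_Ico_right hs.2) subset_rfl
  have hG : ContinuousOn (fun r => ∫ u in c..d, F' r u) (Ico a b) := by
    intro r hr
    obtain ⟨r₁, hrr₁, hr₁b⟩ := exists_between hr.2
    have hF'r₁ : ContinuousOn (uncurry F') (Icc a r₁ ×ˢ uIcc c d) := by
      rw [uIcc_of_le hcd]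
      exact hF'.mono (hbox r₁ ⟨hr.1.trans hrr₁.le, hr₁b⟩)
    have hcont := isCompact_Icc.continuousOn_intervalIntegral hF'r₁
    exact (hcont r ⟨hr.1, hrr₁.le⟩).mono_of_mem_nhdsWithin
      (mem_of_superset (inter_mem_nhdsWithin (Ico a b) (Iio_mem_nhds hrr₁))
        fun x hx => ⟨hx.1.1, hx.2.le⟩)
  have ha : a ∈ Ico a b := ⟨le_rfl, ht.1.trans_lt ht.2⟩
  have hprim : ∀ s ∈ Ico a b,
      ∫ u in c..d, F s u = (∫ u in c..d, F a u) + ∫ r in a..s, ∫ u in c..d, F' r u := by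
    intro s hs
    rw [← sub_eq_iff_eq_add', ← intervalIntegral.integral_sub (hint s hs) (hint a ha),
      intervalIntegral_swap_of_continuousOn hs.1 hcd (hF'.mono (hbox s hs))]
    refine intervalIntegral.integral_congr fun u hu => ?_
    rw [uIcc_of_le hcd] at hu
    rw [integral_eq_sub_of_hasDerivWithinAt_Ico (hF u hu) (hF'.uncurry_right u hu) hs]
  exact ((integral_hasDerivWithinAt_right_Ico hG ht).const_add (∫ u in c..d, F a u)).congr
    hprim (hprim t ht)

end ParametricIntegral

section SmoothFamily

variable {E F : Type*} [NormedAddCommGroup E] [NormedSpace ℝ E] [NormedAddCommGroup F]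
  [NormedSpace ℝ F] {S : Set ℝ}

theorem HasFDerivWithinAt.hasDerivWithinAt_comp_prodMk_left {f : ℝ × ℝ → F}
    {f' : ℝ × ℝ →L[ℝ] F} {t u : ℝ} (hf : HasFDerivWithinAt f f' (S ×ˢ univ) (t, u)) :
    HasDerivWithinAt (fun r => f (r, u)) (f' (1, 0)) S t :=
  hf.comp_hasDerivWithinAt t ((hasDerivAt_id t).prodMk (hasDerivAt_const t u)).hasDerivWithinAt
    fun _ hr => mk_mem_prod hr (mem_univ u)

theorem HasFDerivWithinAt.hasDerivAt_comp_prodMk_right {f : ℝ × ℝ → F}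
    {f' : ℝ × ℝ →L[ℝ] F} {t u : ℝ} (hf : HasFDerivWithinAt f f' (S ×ˢ univ) (t, u))
    (ht : t ∈ S) : HasDerivAt (fun v => f (t, v)) (f' (0, 1)) u := by
  rw [← hasDerivWithinAt_univ]
  exact hf.comp_hasDerivWithinAt u
    ((hasDerivAt_const u t).prodMk (hasDerivAt_id u)).hasDerivWithinAt
    fun v _ => mk_mem_prod ht (mem_univ v)

def timeDeriv (S : Set ℝ) (X : ℝ → ℝ → E) (t u : ℝ) : E := derivWithin (fun r => X r u) S t

variable {X : ℝ → ℝ → E} {t u : ℝ}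

theorem timeDeriv_eq_fderivWithin (hX : DifferentiableOn ℝ (uncurry X) (S ×ˢ univ))
    (hS : UniqueDiffOn ℝ S) (ht : t ∈ S) :
    timeDeriv S X t u = fderivWithin ℝ (uncurry X) (S ×ˢ univ) (t, u) (1, 0) :=
  ((hX (t, u) ⟨ht, mem_univ u⟩).hasFDerivWithinAt.hasDerivWithinAt_comp_prodMk_left).derivWithin
    (hS t ht)

theorem deriv_eq_fderivWithin (hX : DifferentiableOn ℝ (uncurry X) (S ×ˢ univ)) (ht : t ∈ S) :
    deriv (X t) u = fderivWithin ℝ (uncurry X) (S ×ˢ univ) (t, u) (0, 1) :=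
  ((hX (t, u) ⟨ht, mem_univ u⟩).hasFDerivWithinAt.hasDerivAt_comp_prodMk_right ht).deriv

theorem hasDerivWithinAt_timeDeriv (hX : DifferentiableOn ℝ (uncurry X) (S ×ˢ univ))
    (ht : t ∈ S) : HasDerivWithinAt (X · u) (timeDeriv S X t u) S t :=
  (hX (t, u) ⟨ht, mem_univ u⟩).hasFDerivWithinAt.hasDerivWithinAt_comp_prodMk_left
    |>.differentiableWithinAt.hasDerivWithinAt

theorem continuousOn_uncurry_timeDeriv (hX : ContDiffOn ℝ 1 (uncurry X) (S ×ˢ univ))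
    (hS : UniqueDiffOn ℝ S) : ContinuousOn (uncurry (timeDeriv S X)) (S ×ˢ univ) := by
  have hD := hX.continuousOn_fderivWithin (hS.prod uniqueDiffOn_univ) le_rfl
  refine ((ContinuousLinearMap.apply ℝ E ((1 : ℝ), (0 : ℝ))).continuous.comp_continuousOn
    hD).congr fun p hp => ?_
  exact timeDeriv_eq_fderivWithin (hX.differentiableOn one_ne_zero) hS hp.1

theorem continuousOn_uncurry_deriv (hX : ContDiffOn ℝ 1 (uncurry X) (S ×ˢ univ))
    (hS : UniqueDiffOn ℝ S) : ContinuousOn (uncurry fun t => deriv (X t)) (S ×ˢ univ) := by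
  have hD := hX.continuousOn_fderivWithin (hS.prod uniqueDiffOn_univ) le_rfl
  refine ((ContinuousLinearMap.apply ℝ E ((0 : ℝ), (1 : ℝ))).continuous.comp_continuousOn
    hD).congr fun p hp => ?_
  exact deriv_eq_fderivWithin (hX.differentiableOn one_ne_zero) hp.1

theorem hasDerivAt_timeDeriv (hX : ContDiffOn ℝ 2 (uncurry X) (S ×ˢ univ))
    (hS : UniqueDiffOn ℝ S) (ht : t ∈ S) :
    HasDerivAt (timeDeriv S X t)
      (fderivWithin ℝ (fderivWithin ℝ (uncurry X) (S ×ˢ univ)) (S ×ˢ univ) (t, u) (0, 1) (1, 0))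
      u := by
  have hD := (hX.fderivWithin (hS.prod uniqueDiffOn_univ) (m := 1) le_rfl).differentiableOn
    one_ne_zero
  have h := (ContinuousLinearMap.apply ℝ E ((1 : ℝ), (0 : ℝ))).hasFDerivAt.comp_hasDerivAt u
    ((hD (t, u) ⟨ht, mem_univ u⟩).hasFDerivWithinAt.hasDerivAt_comp_prodMk_right ht)
  refine h.congr_of_eventuallyEq (Eventually.of_forall fun v => ?_)
  exact timeDeriv_eq_fderivWithin (hX.differentiableOn two_ne_zero) hS ht

theorem continuousOn_uncurry_deriv_timeDeriv (hX : ContDiffOn ℝ 2 (uncurry X) (S ×ˢ univ))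
    (hS : UniqueDiffOn ℝ S) :
    ContinuousOn (uncurry fun t => deriv (timeDeriv S X t)) (S ×ˢ univ) := by
  have hU : UniqueDiffOn ℝ (S ×ˢ (univ : Set ℝ)) := hS.prod uniqueDiffOn_univ
  have hD' := (hX.fderivWithin hU (m := 1) le_rfl).continuousOn_fderivWithin hU le_rfl
  refine ((ContinuousLinearMap.apply ℝ E ((1 : ℝ), (0 : ℝ))).continuous.comp
    (ContinuousLinearMap.apply ℝ ((ℝ × ℝ) →L[ℝ] E) ((0 : ℝ), (1 : ℝ))).continuous
      |>.comp_continuousOn hD').congr fun p hp => ?_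
  exact (hasDerivAt_timeDeriv hX hS hp.1).deriv

theorem hasDerivWithinAt_deriv_comm_timeDeriv (hX : ContDiffOn ℝ 2 (uncurry X) (S ×ˢ univ))
    (hS : UniqueDiffOn ℝ S) (ht : t ∈ S) (ht' : t ∈ closure (interior S)) :
    HasDerivWithinAt (fun r => deriv (X r) u) (deriv (timeDeriv S X t) u) S t := by
  have hU : UniqueDiffOn ℝ (S ×ˢ (univ : Set ℝ)) := hS.prod uniqueDiffOn_univ
  have hD := (hX.fderivWithin hU (m := 1) le_rfl).differentiableOn one_ne_zero
  have h := (ContinuousLinearMap.apply ℝ E ((0 : ℝ), (1 : ℝ))).hasFDerivAt.comp_hasDerivWithinAt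
    t (hD (t, u) ⟨ht, mem_univ u⟩).hasFDerivWithinAt.hasDerivWithinAt_comp_prodMk_left
  have hsymm : IsSymmSndFDerivWithinAt ℝ (uncurry X) (S ×ˢ univ) (t, u) := by
    refine (hX (t, u) ⟨ht, mem_univ u⟩).isSymmSndFDerivWithinAt (by simp) hU ?_
      ⟨ht, mem_univ u⟩
    rw [interior_prod_eq, interior_univ, closure_prod_eq, closure_univ]
    exact ⟨ht', mem_univ u⟩
  rw [(hasDerivAt_timeDeriv hX hS ht).deriv, ← hsymm]
  exact h.congr (fun r hr => deriv_eq_fderivWithin (hX.differentiableOn two_ne_zero) hr)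
    (deriv_eq_fderivWithin (hX.differentiableOn two_ne_zero) ht)

end SmoothFamily

section Area

theorem perp_apply_zero (p : E2) : perp p 0 = p 1 := rfl

theorem perp_apply_one (p : E2) : perp p 1 = -(p 0) := rfl

def perpCLM : E2 →L[ℝ] E2 :=
  LinearMap.toContinuousLinearMap
    { toFun := perp
      map_add' := fun x y => by
        ext i; fin_cases i <;> simp [perp_apply_zero, perp_apply_one, add_comm]
      map_smul' := fun c x => by
        ext i; fin_cases i <;> simp [perp_apply_zero, perp_apply_one] }

theorem inner_perp_swap (a b : E2) : ⟪a, perp b⟫ = -⟪b, perp a⟫ := by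
  simp only [PiLp.inner_apply, RCLike.inner_apply, starRingEnd_apply, Fin.sum_univ_two,
    perp_apply_zero, perp_apply_one, star_trivial]
  ring

theorem inner_unitNormal_mul_norm_deriv {Y : ℝ → E2} {u : ℝ} (v : E2) (h : deriv Y u ≠ 0) :
    ⟪v, unitNormal Y u⟫ * ‖deriv Y u‖ = ⟪v, perp (deriv Y u)⟫ := by
  rw [unitNormal, real_inner_smul_right, inv_mul_eq_div, div_mul_cancel₀ _ (norm_ne_zero_iff.2 h)]

theorem integral_inner_perp_deriv_swap {Y W Y' W' : ℝ → E2} {a b : ℝ}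
    (hY : ∀ u, HasDerivAt Y (Y' u) u) (hW : ∀ u, HasDerivAt W (W' u) u)
    (hY' : Continuous Y') (hW' : Continuous W') (hYab : Y b = Y a) (hWab : W b = W a) :
    ∫ u in a..b, ⟪Y u, perp (W' u)⟫ = ∫ u in a..b, ⟪W u, perp (Y' u)⟫ := by
  have hYc : Continuous Y := continuous_iff_continuousAt.2 fun u => (hY u).continuousAt
  have hWc : Continuous W := continuous_iff_continuousAt.2 fun u => (hW u).continuousAt
  have hderiv : ∀ u, HasDerivAt (fun v => ⟪Y v, perp (W v)⟫)
      (⟪Y u, perp (W' u)⟫ - ⟪W u, perp (Y' u)⟫) u := fun u => by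
    refine ((hY u).inner ℝ (perpCLM.hasFDerivAt.comp_hasDerivAt u (hW u))).congr_deriv ?_
    change ⟪Y u, perp (W' u)⟫ + ⟪Y' u, perp (W u)⟫ = _
    rw [inner_perp_swap (Y' u), sub_eq_add_neg]
  have hint : ∀ {f g : ℝ → E2}, Continuous f → Continuous g →
      IntervalIntegrable (fun u => ⟪f u, perp (g u)⟫) volume a b := fun hf hg =>
    (hf.inner (perpCLM.continuous.comp hg)).intervalIntegrable a b
  have hFTC := intervalIntegral.integral_eq_sub_of_hasDerivAt (fun u _ => hderiv u)
    ((hint hYc hW').sub (hint hWc hY'))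
  rw [hYab, hWab, sub_self, intervalIntegral.integral_sub (hint hYc hW') (hint hWc hY')] at hFTC
  exact sub_eq_zero.1 hFTC

end Area

section FirstVariation

variable {X : ℝ → ℝ → E2} {t : ℝ}

theorem hasDerivWithinAt_enclosedArea_of_contDiffOn {a b : ℝ}
    (hX : ContDiffOn ℝ 2 (uncurry X) (Ico a b ×ˢ univ)) (ht : t ∈ Ico a b) :
    HasDerivWithinAt (fun s => enclosedArea (X s))
      ((1 / 2) * ∫ u in (0 : ℝ)..1, (⟪X t u, perp (deriv (timeDeriv (Ico a b) X t) u)⟫ +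
        ⟪timeDeriv (Ico a b) X t u, perp (deriv (X t) u)⟫)) (Ico a b) t := by
  have hS : UniqueDiffOn ℝ (Ico a b) := uniqueDiffOn_Ico a b
  have hclosure : Ico a b ⊆ closure (interior (Ico a b)) := by
    rw [interior_Ico, closure_Ioo (ht.1.trans_lt ht.2).ne]
    exact Ico_subset_Icc_self
  have hXu := continuousOn_uncurry_deriv (hX.of_le one_le_two) hS
  have hV := continuousOn_uncurry_timeDeriv (hX.of_le one_le_two) hS
  have hVu := continuousOn_uncurry_deriv_timeDeriv hX hS
  have hdiff := hX.differentiableOn two_ne_zero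
  have hintegrand : ContinuousOn (uncurry fun r u => ⟪X r u, perp (deriv (X r) u)⟫)
      (Ico a b ×ˢ univ) :=
    hX.continuousOn.inner (perpCLM.continuous.comp_continuousOn hXu)
  refine (hasDerivWithinAt_intervalIntegral_Ico (F := fun r u => ⟪X r u, perp (deriv (X r) u)⟫)
    (F' := fun r u => ⟪X r u, perp (deriv (timeDeriv (Ico a b) X r) u)⟫ +
      ⟪timeDeriv (Ico a b) X r u, perp (deriv (X r) u)⟫) zero_le_one (fun u _ r hr => ?_) ?_
    (fun s hs => ?_) ht).const_mul (1 / 2)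
  · exact (hasDerivWithinAt_timeDeriv hdiff hr).inner ℝ
      (perpCLM.hasFDerivAt.comp_hasDerivWithinAt r
        (hasDerivWithinAt_deriv_comm_timeDeriv hX hS hr (hclosure hr)))
  · exact ((hX.continuousOn.inner (perpCLM.continuous.comp_continuousOn hVu)).add
      (hV.inner (perpCLM.continuous.comp_continuousOn hXu))).mono
        (prod_mono subset_rfl (subset_univ _))
  · exact ((hintegrand.uncurry_left s hs).mono (subset_univ _)).intervalIntegrable

theorem IsSmoothClosedFamily.hasDerivWithinAt_enclosedArea {T : ℝ}
    (hX : IsSmoothClosedFamily T X) (ht : t ∈ Ico 0 T) :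
    HasDerivWithinAt (fun s => enclosedArea (X s))
      (∫ u in (0 : ℝ)..1, ⟪timeDeriv (Ico 0 T) X t u, perp (deriv (X t) u)⟫)
      (Ico 0 T) t := by
  set V := timeDeriv (Ico 0 T) X t
  have hS : UniqueDiffOn ℝ (Ico 0 T) := uniqueDiffOn_Ico 0 T
  obtain ⟨hXt, hXper, -⟩ := hX.2 t ht
  have hX' : ∀ u, HasDerivAt (X t) (deriv (X t) u) u := fun u =>
    ((hXt.differentiable two_ne_zero) u).hasDerivAt
  have hV' : ∀ u, HasDerivAt V (deriv V u) u := fun u =>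
    (hasDerivAt_timeDeriv hX.1 hS ht).differentiableAt.hasDerivAt
  have hXu : Continuous (deriv (X t)) := hXt.continuous_deriv one_le_two
  have hVu : Continuous (deriv V) :=
    continuousOn_univ.1 ((continuousOn_uncurry_deriv_timeDeriv hX.1 hS).uncurry_left t ht)
  have hV : Continuous V := continuous_iff_continuousAt.2 fun u => (hV' u).continuousAt
  have hXper₁ : X t 1 = X t 0 := by simpa using hXper 0
  have hVper : V 1 = V 0 :=
    derivWithin_congr (fun r hr => by simpa using (hX.2 r hr).2.1 0) hXper₁
  have hIBP := integral_inner_perp_deriv_swap hX' hV' hXu hVu hXper₁ hVper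
  have hint : ∀ {f g : ℝ → E2}, Continuous f → Continuous g →
      IntervalIntegrable (fun u => ⟪f u, perp (g u)⟫) volume 0 1 := fun hf hg =>
    (hf.inner (perpCLM.continuous.comp hg)).intervalIntegrable 0 1
  convert hasDerivWithinAt_enclosedArea_of_contDiffOn hX.1 ht using 1
  rw [intervalIntegral.integral_add (hint hXt.continuous hVu) (hint hV hXu), hIBP]
  ring

end FirstVariation

/-- First variation of the signed enclosed area for a smooth family of closed curves
on `[0,T)`: `dA/dt = ∫₀¹ (∂ₜX ⬝ n) |∂ᵤX| du`. -/
theorem area_first_variation (T : ℝ) (X : ℝ → ℝ → E2)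
    (hX : IsSmoothClosedFamily T X) :
    ∀ t ∈ Ico (0:ℝ) T,
      HasDerivWithinAt (fun s => enclosedArea (X s))
        (∫ u in (0:ℝ)..1,
          ⟪derivWithin (fun s => X s u) (Ico 0 T) t, unitNormal (X t) u⟫ * ‖deriv (X t) u‖)
        (Ico 0 T) t := by
  intro t ht
  refine (hX.hasDerivWithinAt_enclosedArea ht).congr_deriv ?_
  exact intervalIntegral.integral_congr fun u _ =>
    (inner_unitNormal_mul_norm_deriv _ ((hX.2 t ht).2.2 u)).symm
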